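/- Language compilation preserves the store-sequence abstraction: for every statement S, α_st(T_GP(S)) = α_st(T^ι(C(S))), where α_st maps a set of traces to the set of their store sequences, T_GP(S) is the set of partial traces of S under →_B starting at ⟨ρ,S⟩ for any store ρ, and T^ι(C(S)) is the set of partial traces of the compiled program C(S) starting at its initial label. -/

import Mathlib

/-- Guo–Palsberg statements: sequences of commands in continuation style. -/
inductive Stm (Exp BExp : Type) : Type
  | nil : Stm Exp BExp
  | skipC : Stm Exp BExp → Stm Exp BExp
  | assign : String → Exp → Stm Exp BExp → Stm Exp BExp
  | ite : BExp → Stm Exp BExp → Stm Exp BExp → Stm Exp BExp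
  | whileC : BExp → Stm Exp BExp → Stm Exp BExp → Stm Exp BExp
  | bail : BExp → Stm Exp BExp → Stm Exp BExp → Stm Exp BExp

/-- Concatenation of statements. -/
def Stm.app {Exp BExp : Type} : Stm Exp BExp → Stm Exp BExp → Stm Exp BExp
  | .nil, K => K
  | .skipC K', K => .skipC (K'.app K)
  | .assign x e K', K => .assign x e (K'.app K)
  | .ite b S K', K => .ite b S (K'.app K)
  | .whileC b S K', K => .whileC b S (K'.app K)
  | .bail b S K', K => .bail b S (K'.app K)

/-- The deterministic small-step operational semantics →_B of Guo–Palsberg. -/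
inductive StepB {Val Exp BExp : Type} (eval : Exp → (String → Val) → Val)
    (beval : BExp → (String → Val) → Bool) :
    (String → Val) × Stm Exp BExp → (String → Val) × Stm Exp BExp → Prop
  | skip (ρ : String → Val) (K : Stm Exp BExp) :
      StepB eval beval (ρ, .skipC K) (ρ, K)
  | assign (ρ : String → Val) (x : String) (e : Exp) (K : Stm Exp BExp) :
      StepB eval beval (ρ, .assign x e K) (Function.update ρ x (eval e ρ), K)
  | iteT (ρ : String → Val) (b : BExp) (S K : Stm Exp BExp) :
      beval b ρ = true → StepB eval beval (ρ, .ite b S K) (ρ, S.app K)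
  | iteF (ρ : String → Val) (b : BExp) (S K : Stm Exp BExp) :
      beval b ρ = false → StepB eval beval (ρ, .ite b S K) (ρ, K)
  | whileU (ρ : String → Val) (b : BExp) (S K : Stm Exp BExp) :
      StepB eval beval (ρ, .whileC b S K)
        (ρ, .ite b (S.app (.whileC b S .nil)) K)
  | bailT (ρ : String → Val) (b : BExp) (S K : Stm Exp BExp) :
      beval b ρ = true → StepB eval beval (ρ, .bail b S K) (ρ, S)
  | bailF (ρ : String → Val) (b : BExp) (S K : Stm Exp BExp) :
      beval b ρ = false → StepB eval beval (ρ, .bail b S K) (ρ, K)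

/-- Actions of the labeled-command target language. -/
inductive Act (Exp BExp : Type) : Type
  | skipA : Act Exp BExp
  | assignA : String → Exp → Act Exp BExp
  | testA : BExp → Bool → Act Exp BExp

/-- Labeled commands L : A → L'; labels are statements (via the injective
labeling l = id), with none playing the role of the undefined label ⊥. -/
structure Cmd (Exp BExp : Type) : Type where
  lbl : Stm Exp BExp
  act : Act Exp BExp
  suc : Option (Stm Exp BExp)

/-- Action semantics. -/
def Asem {Val Exp BExp : Type} (eval : Exp → (String → Val) → Val)
    (beval : BExp → (String → Val) → Bool) :
    Act Exp BExp → (String → Val) → Option (String → Val)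
  | .skipA, ρ => some ρ
  | .assignA x e, ρ => some (Function.update ρ x (eval e ρ))
  | .testA b pos, ρ => if beval b ρ = pos then some ρ else none

/-- The (generic) transition semantics of the labeled-command language. -/
def Strans {Val Exp BExp : Type} (eval : Exp → (String → Val) → Val)
    (beval : BExp → (String → Val) → Bool)
    (s s' : ((String → Val) × Cmd Exp BExp)) : Prop :=
  Asem eval beval s.2.act s.1 = some s'.1 ∧ s.2.suc = some s'.2.lbl

/-- The state compile function C^s, translating GP states to labeled-command
states (conditionals resolved by the truth value of the guard in the store). -/
def Cs {Val Exp BExp : Type} (eval : Exp → (String → Val) → Val)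
    (beval : BExp → (String → Val) → Bool) :
    (String → Val) × Stm Exp BExp → (String → Val) × Cmd Exp BExp
  | (ρ, .nil) => (ρ, ⟨.nil, .skipA, none⟩)
  | (ρ, .skipC K) => (ρ, ⟨.skipC K, .skipA, some K⟩)
  | (ρ, .assign x e K) => (ρ, ⟨.assign x e K, .assignA x e, some K⟩)
  | (ρ, .ite b S K) =>
      if beval b ρ then (ρ, ⟨.ite b S K, .testA b true, some (S.app K)⟩)
      else (ρ, ⟨.ite b S K, .testA b false, some K⟩)
  | (ρ, .whileC b S K) =>
      (ρ, ⟨.whileC b S K, .skipA, some (.ite b (S.app (.whileC b S .nil)) K)⟩)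
  | (ρ, .bail b S K) =>
      if beval b ρ then (ρ, ⟨.bail b S K, .testA b true, some S⟩)
      else (ρ, ⟨.bail b S K, .testA b false, some K⟩)

/-- The "first command(s)" compilation function 𝖢. -/
def CC {Exp BExp : Type} : Stm Exp BExp → Set (Cmd Exp BExp)
  | .nil => {⟨.nil, .skipA, none⟩}
  | .skipC K => {⟨.skipC K, .skipA, some K⟩}
  | .assign x e K => {⟨.assign x e K, .assignA x e, some K⟩}
  | .ite b S K =>
      {⟨.ite b S K, .testA b true, some (S.app K)⟩,
       ⟨.ite b S K, .testA b false, some K⟩}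
  | .whileC b S K =>
      {⟨.whileC b S K, .skipA, some (.ite b (S.app (.whileC b S .nil)) K)⟩}
  | .bail b S K =>
      {⟨.bail b S K, .testA b true, some S⟩,
       ⟨.bail b S K, .testA b false, some K⟩}

/-- The successor-statement relation underlying the recursive definition of the
full compilation function 𝒞. -/
inductive SuccStm {Exp BExp : Type} : Stm Exp BExp → Stm Exp BExp → Prop
  | skip (K : Stm Exp BExp) : SuccStm (.skipC K) K
  | assign (x : String) (e : Exp) (K : Stm Exp BExp) : SuccStm (.assign x e K) K
  | iteThen (b : BExp) (S K : Stm Exp BExp) : SuccStm (.ite b S K) (S.app K)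
  | iteElse (b : BExp) (S K : Stm Exp BExp) : SuccStm (.ite b S K) K
  | whileU (b : BExp) (S K : Stm Exp BExp) :
      SuccStm (.whileC b S K) (.ite b (S.app (.whileC b S .nil)) K)
  | bailTo (b : BExp) (S K : Stm Exp BExp) : SuccStm (.bail b S K) S
  | bailElse (b : BExp) (S K : Stm Exp BExp) : SuccStm (.bail b S K) K

/-- The full compilation function 𝒞: all first commands of statements reachable
through the recursive calls. -/
def compile {Exp BExp : Type} (S : Stm Exp BExp) : Set (Cmd Exp BExp) :=
  ⋃ S' ∈ {S' | Relation.ReflTransGen SuccStm S S'}, CC S'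

/-- T_GP(S): partial traces of S under →_B, starting at ⟨ρ,S⟩ for any store ρ. -/
def TGP {Val Exp BExp : Type} (eval : Exp → (String → Val) → Val)
    (beval : BExp → (String → Val) → Bool) (S : Stm Exp BExp) :
    Set (List ((String → Val) × Stm Exp BExp)) :=
  {τ | τ ≠ [] ∧ (∃ ρ : String → Val, τ.head? = some (ρ, S)) ∧
    τ.Chain' (StepB eval beval)}

/-- T^ι(P) at initial label L: partial traces of the program P ⊆ Cmd starting
at a state whose command is labeled L. -/
def Tiota {Val Exp BExp : Type} (eval : Exp → (String → Val) → Val)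
    (beval : BExp → (String → Val) → Bool) (P : Set (Cmd Exp BExp))
    (L : Stm Exp BExp) : Set (List ((String → Val) × Cmd Exp BExp)) :=
  {τ | τ ≠ [] ∧ (∀ s ∈ τ, s.2 ∈ P) ∧
    (∃ (ρ : String → Val) (C : Cmd Exp BExp), τ.head? = some (ρ, C) ∧ C.lbl = L) ∧
    τ.Chain' (Strans eval beval)}

/-! Both inclusions are simulations that leave stores untouched. `Cs` maps a →_B trace
state by state to a trace of the compiled program: each →_B step becomes a transition, and every
statement visited is `SuccStm`-reachable from `S`, so its commands belong to `compile S`.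
Conversely, in a program made of first commands `CC L`, replacing each command by its label turns
every transition into a →_B step of that label. -/

theorem List.IsChain.reflTransGen_of_head? {α : Type*} {R : α → α → Prop} {l : List α} {a : α}
    (hl : l.IsChain R) (ha : l.head? = some a) : ∀ x ∈ l, Relation.ReflTransGen R a x :=
  hl.induction _ _ (fun _ _ hxy hax => hax.tail hxy) fun hne => by
    rw [List.head?_eq_some_head hne, Option.some.injEq] at ha
    exact ha ▸ .refl

section

variable {Val Exp BExp : Type} {eval : Exp → (String → Val) → Val}
  {beval : BExp → (String → Val) → Bool}

@[simp]
theorem Cs_fst (s : (String → Val) × Stm Exp BExp) : (Cs eval beval s).1 = s.1 := by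
  obtain ⟨ρ, S⟩ := s
  cases S <;> simp only [Cs] <;> split <;> rfl

@[simp]
theorem Cs_snd_lbl (s : (String → Val) × Stm Exp BExp) : (Cs eval beval s).2.lbl = s.2 := by
  obtain ⟨ρ, S⟩ := s
  cases S <;> simp only [Cs] <;> split <;> rfl

theorem Cs_snd_mem_CC (s : (String → Val) × Stm Exp BExp) : (Cs eval beval s).2 ∈ CC s.2 := by
  obtain ⟨ρ, S⟩ := s
  cases S <;> simp only [Cs, CC] <;> try split
  all_goals simp

theorem lbl_eq_of_mem_CC {C : Cmd Exp BExp} {L : Stm Exp BExp} (h : C ∈ CC L) : C.lbl = L := by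
  cases L <;> simp only [CC, Set.mem_singleton_iff, Set.mem_insert_iff] at h <;>
    rcases h with rfl | rfl <;> rfl

theorem mem_CC_lbl_of_mem_compile {C : Cmd Exp BExp} {S : Stm Exp BExp} (h : C ∈ compile S) :
    C ∈ CC C.lbl := by
  obtain ⟨L, -, hC⟩ := Set.mem_iUnion₂.mp h
  rwa [lbl_eq_of_mem_CC hC]

theorem StepB.succStm {s s' : (String → Val) × Stm Exp BExp} (h : StepB eval beval s s') :
    SuccStm s.2 s'.2 := by
  cases h <;> constructor

theorem StepB.strans_Cs {s s' : (String → Val) × Stm Exp BExp} (h : StepB eval beval s s') :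
    Strans eval beval (Cs eval beval s) (Cs eval beval s') := by
  simp only [Strans, Cs_fst, Cs_snd_lbl]
  cases h <;> simp [Cs, Asem, *]

theorem StepB.of_strans {L : Stm Exp BExp} {C C' : Cmd Exp BExp} {ρ ρ' : String → Val}
    (hC : C ∈ CC L) (h : Strans eval beval (ρ, C) (ρ', C')) :
    StepB eval beval (ρ, L) (ρ', C'.lbl) := by
  obtain ⟨hact, hsuc⟩ := h
  cases L <;> simp only [CC, Set.mem_singleton_iff, Set.mem_insert_iff] at hC <;>
    rcases hC with rfl | rfl <;>
    simp only [Asem, Option.some.injEq, Option.ite_none_right_eq_some, reduceCtorEq] at hact hsuc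
  all_goals
    rw [← hsuc]
    first
      | (subst hact; constructor)
      | (obtain ⟨hb, rfl⟩ := hact; constructor; exact hb)

theorem map_Cs_mem_Tiota {S : Stm Exp BExp} {τ : List ((String → Val) × Stm Exp BExp)}
    (hτ : τ ∈ TGP eval beval S) : τ.map (Cs eval beval) ∈ Tiota eval beval (compile S) S := by
  obtain ⟨hne, ⟨ρ, hhead⟩, hchain⟩ := hτ
  have hreach : ∀ s ∈ τ, Relation.ReflTransGen SuccStm S s.2 := fun s hs =>
    (hchain.reflTransGen_of_head? hhead s hs).lift Prod.snd fun _ _ => StepB.succStm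
  refine ⟨by simpa using hne, ?_,
    ⟨ρ, (Cs eval beval (ρ, S)).2, by simp [hhead, Prod.ext_iff], Cs_snd_lbl _⟩,
    List.isChain_map_of_isChain _ (fun _ _ h => h.strans_Cs) hchain⟩
  simp only [List.mem_map, forall_exists_index, and_imp, forall_apply_eq_imp_iff₂]
  exact fun s hs => Set.mem_biUnion (hreach s hs) (Cs_snd_mem_CC s)

theorem map_lbl_mem_TGP {P : Set (Cmd Exp BExp)} (hP : ∀ C ∈ P, C ∈ CC C.lbl) {L : Stm Exp BExp}
    {τ : List ((String → Val) × Cmd Exp BExp)} (hτ : τ ∈ Tiota eval beval P L) :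
    τ.map (fun s => (s.1, s.2.lbl)) ∈ TGP eval beval L := by
  obtain ⟨hne, hmem, ⟨ρ, C, hhead, rfl⟩, hchain⟩ := hτ
  refine ⟨by simpa using hne, ⟨ρ, by simp [hhead]⟩, ?_⟩
  exact (List.isChain_map _).2 <| hchain.imp_of_mem_imp fun s _ hs _ h =>
    StepB.of_strans (hP _ (hmem s hs)) h

end

/-- Language compilation preserves the store-sequence abstraction:
α_st(T_GP(S)) = α_st(T^ι(𝒞(S))). -/
theorem compilation_preserves_store_sequences {Val Exp BExp : Type}
    (eval : Exp → (String → Val) → Val) (beval : BExp → (String → Val) → Bool)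
    (S : Stm Exp BExp) :
    (fun τ => τ.map Prod.fst) '' TGP eval beval S =
      (fun τ => τ.map Prod.fst) '' Tiota eval beval (compile S) S := by
  refine subset_antisymm ?_ ?_
  · rintro _ ⟨τ, hτ, rfl⟩
    exact ⟨_, map_Cs_mem_Tiota hτ, by simp [Function.comp_def]⟩
  · rintro _ ⟨τ, hτ, rfl⟩
    exact ⟨_, map_lbl_mem_TGP (fun _ => mem_CC_lbl_of_mem_compile) hτ,
      by simp [Function.comp_def]⟩
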